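/- Let q = p^e be a prime power, A a commutative ring containing 𝔽_q, n ≥ 1 an integer, J ⊆ A an ideal with J^{q^{n+1}} = 0, and ζ, h ∈ J. Suppose η ∈ GL₂(A((z))) satisfies: (i) all entries of τ := η⁻¹·diag(z,1)·σ(η) lie in A[[z]]; (ii) det τ = (z − ζ)·u for some unit u of A[[z]]; and (iii) every coefficient of every entry of the matrix η⁻¹ − η_{n,h}⁻¹ lies in the ideal J^{q^n}. Then there exist h̃ ∈ J with h̃ − h ∈ J^{q^n} and a matrix g ∈ GL₂(A[[z]]) such that η = η_{n+1,h̃} · g. -/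

import Mathlib

/-- The quasi-isogeny matrix `η_{n,h}` over `A((z))`, with rows
`(∏_{i=0}^{n-1} z·(z−ζ^{q^i})⁻¹, 0)` and `(−∑_{i=0}^{n-1} h^{q^i}·∏_{j=0}^{i}(z−ζ^{q^j})⁻¹, 1)`. -/
noncomputable def eta (q : ℕ) {A : Type*} [CommRing A] (ζ h : A) (n : ℕ) :
    Matrix (Fin 2) (Fin 2) (LaurentSeries A) :=
  !![∏ i ∈ Finset.range n, (HahnSeries.single (1 : ℤ) (1 : A) : LaurentSeries A) *
        Ring.inverse ((HahnSeries.single (1 : ℤ) (1 : A) : LaurentSeries A) -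
          HahnSeries.C (ζ ^ q ^ i)), 0;
     -∑ i ∈ Finset.range n, HahnSeries.C (h ^ q ^ i) *
        ∏ j ∈ Finset.range (i + 1),
          Ring.inverse ((HahnSeries.single (1 : ℤ) (1 : A) : LaurentSeries A) -
            HahnSeries.C (ζ ^ q ^ j)), 1]

/-!
Write `z` for the variable and `L_t := !![z - ζ, 0; t, 1]`. The matrices `η_{n,ζ,h}` satisfy
`σ η_{n,ζ,h} = η_{n,ζ^q,h^q}` and the recursion `η_{n+1,ζ,h} · L_h = diag(z,1) · η_{n,ζ^q,h^q}`.
Since `(J^{q^n})^q = 0`, `σ` kills every Laurent series with coefficients in `J^{q^n}`; as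
`η ≡ η_{n,ζ,h}` modulo `J^{q^n}`, this gives `σ η = η_{n,ζ^q,h^q}`, i.e. `η τ = η_{n+1,ζ,h} L_h`,
and with `η_{n+1,ζ,h} ≡ η_{n,ζ,h}` it gives `τ ≡ L_h` modulo `J^{q^n}`.

As `ζ` is nilpotent, `f ↦ f(ζ)` is a ring map `A[[z]] → A` whose kernel is `(z - ζ)`, and `z - ζ`
is a non-zero-divisor. Put `ht := τ₁₀(ζ) / τ₁₁(ζ) ≡ h`. Because `det τ` vanishes at `ζ`, so does
the second row of `L_{ht} · adj τ`, and `g := L_{ht} · adj τ / det τ` lies in `GL₂(A[[z]])` with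
`g τ = L_{ht}`. Finally `ht^q = h^q` by additivity of Frobenius, so
`η τ = η_{n+1,ζ,h} L_h = diag(z,1) η_{n,ζ^q,ht^q} = η_{n+1,ζ,ht} g τ`, and `τ` is invertible.
-/

theorem map_ringInverse {M N F : Type*} [MonoidWithZero M] [MonoidWithZero N] [FunLike F M N]
    [MonoidHomClass F M N] (f : F) {x : M} (hx : IsUnit x) :
    f (Ring.inverse x) = Ring.inverse (f x) := by
  obtain ⟨u, rfl⟩ := hx
  have := Ring.inverse_unit (Units.map (f : M →* N) u)
  simp only [Units.coe_map, Units.coe_map_inv, MonoidHom.coe_coe] at this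
  rw [Ring.inverse_unit, this]

theorem map_eq_of_map_inv_eq {M N F : Type*} [MonoidWithZero M] [Monoid N] [FunLike F M N]
    [MonoidHomClass F M N] (f : F) (u : Mˣ) {x : M} (hx : IsUnit x)
    (h : f ↑u⁻¹ = f (Ring.inverse x)) : f u = f x :=
  calc f u = f u * f (Ring.inverse x * x) := by rw [Ring.inverse_mul_cancel _ hx, map_one, mul_one]
    _ = f (u * ↑u⁻¹) * f x := by rw [map_mul, map_mul, ← h, mul_assoc]
    _ = f x := by rw [Units.mul_inv, map_one, one_mul]

theorem pow_eq_pow_of_sub_pow_eq_zero {K A : Type*} [Field K] [CommRing A] [Algebra K A]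
    {p : ℕ} [Fact p.Prime] [CharP K p] (e : ℕ) {a b : A} (h : (a - b) ^ p ^ e = 0) :
    a ^ p ^ e = b ^ p ^ e := by
  cases subsingleton_or_nontrivial A
  · exact Subsingleton.elim _ _
  · have := charP_of_injective_algebraMap (algebraMap K A).injective p
    rwa [sub_pow_char_pow, sub_eq_zero] at h

theorem Matrix.map_fin_two_of {α β : Type*} (f : α → β) (a b c d : α) :
    (!![a, b; c, d]).map f = !![f a, f b; f c, f d] := by
  ext i j
  fin_cases i <;> fin_cases j <;> rfl

open scoped PowerSeries

namespace PowerSeries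

variable {A : Type*} [CommRing A] {ζ : A}

theorem eq_zero_of_X_sub_C_mul_eq_C (hζ : IsNilpotent ζ) {w : A⟦X⟧} {c : A}
    (h : (X - C ζ) * w = C c) : w = 0 := by
  obtain ⟨N, hN⟩ := hζ
  have hstep (k : ℕ) : coeff k w = ζ * coeff (k + 1) w := by
    have := congrArg (coeff (k + 1)) h
    rw [sub_mul, map_sub, coeff_succ_X_mul, coeff_C_mul, coeff_C, if_neg k.succ_ne_zero] at this
    exact (sub_eq_zero.1 this)
  have hpow (k m : ℕ) : coeff k w = ζ ^ m * coeff (k + m) w := by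
    induction m with
    | zero => simp
    | succ m ih => rw [ih, hstep, ← mul_assoc, ← pow_succ, add_assoc]
  ext k
  rw [hpow k N, hN, zero_mul, map_zero]

theorem isLeftRegular_X_sub_C (hζ : IsNilpotent ζ) : IsLeftRegular (X - C ζ : A⟦X⟧) :=
  isLeftRegular_iff_right_eq_zero_of_mul.2 fun w hw =>
    eq_zero_of_X_sub_C_mul_eq_C hζ (c := 0) (by rw [hw, map_zero])

theorem eq_of_X_sub_C_dvd (hζ : IsNilpotent ζ) {f : A⟦X⟧} {a b : A}
    (ha : X - C ζ ∣ f - C a) (hb : X - C ζ ∣ f - C b) : a = b := by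
  obtain ⟨w, hw⟩ := dvd_sub hb ha
  have := eq_zero_of_X_sub_C_mul_eq_C hζ (c := a - b) (by rw [← hw, map_sub]; ring)
  rw [this, mul_zero, sub_sub_sub_cancel_left] at hw
  exact C_injective (sub_eq_zero.1 hw)

theorem X_sub_C_dvd_sub_C_eval_trunc {N : ℕ} (hζ : ζ ^ N = 0) (f : A⟦X⟧) :
    X - C ζ ∣ f - C ((trunc N f).eval ζ) := by
  have htail : X ^ N ∣ f - (trunc N f : A⟦X⟧) := X_pow_dvd_iff.2 fun m hm => by
    simp [coeff_trunc, hm]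
  have hXN : X - C ζ ∣ (X : A⟦X⟧) ^ N := by
    simpa [← map_pow, hζ] using sub_dvd_pow_sub_pow (X : A⟦X⟧) (C ζ) N
  have hpoly : X - C ζ ∣ (trunc N f : A⟦X⟧) - C ((trunc N f).eval ζ) := by
    simpa using map_dvd Polynomial.coeToPowerSeries.ringHom
      (Polynomial.X_sub_C_dvd_sub_C_eval (a := ζ) (p := trunc N f))
  simpa using dvd_add (hXN.trans htail) hpoly

/-- `f(ζ)` is the unique `a` with `X - C ζ ∣ f - C a`; since `ζ ^ nilpotencyClass ζ = 0`,
evaluating a truncation of `f` computes it. -/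
noncomputable def evalOfIsNilpotent (hζ : IsNilpotent ζ) : A⟦X⟧ →+* A :=
  have key (f : A⟦X⟧) : X - C ζ ∣ f - C ((trunc (nilpotencyClass ζ) f).eval ζ) :=
    X_sub_C_dvd_sub_C_eval_trunc (pow_nilpotencyClass hζ) f
  { toFun f := (trunc (nilpotencyClass ζ) f).eval ζ
    map_one' := eq_of_X_sub_C_dvd hζ (key 1) (by simp)
    map_mul' f g := eq_of_X_sub_C_dvd hζ (key (f * g)) (by
      rw [map_mul]; exact dvd_mul_sub_mul (key f) (key g))
    map_zero' := eq_of_X_sub_C_dvd hζ (key 0) (by simp)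
    map_add' f g := eq_of_X_sub_C_dvd hζ (key (f + g)) (by
      rw [map_add, add_sub_add_comm]; exact dvd_add (key f) (key g)) }

variable (hζ : IsNilpotent ζ)

theorem X_sub_C_dvd_sub_C_evalOfIsNilpotent (f : A⟦X⟧) :
    X - C ζ ∣ f - C (evalOfIsNilpotent hζ f) :=
  X_sub_C_dvd_sub_C_eval_trunc (pow_nilpotencyClass hζ) f

@[simp]
theorem evalOfIsNilpotent_C (a : A) : evalOfIsNilpotent hζ (C a) = a :=
  eq_of_X_sub_C_dvd hζ (X_sub_C_dvd_sub_C_evalOfIsNilpotent hζ _) (by simp)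

theorem X_sub_C_dvd_iff_evalOfIsNilpotent_eq_zero {f : A⟦X⟧} :
    X - C ζ ∣ f ↔ evalOfIsNilpotent hζ f = 0 := by
  constructor
  · exact fun h => eq_of_X_sub_C_dvd hζ (X_sub_C_dvd_sub_C_evalOfIsNilpotent hζ f) (by simpa)
  · intro h
    simpa [h] using X_sub_C_dvd_sub_C_evalOfIsNilpotent hζ f

theorem evalOfIsNilpotent_mem {I : Ideal A} {f : A⟦X⟧} (hf : ∀ k, coeff k f ∈ I) :
    evalOfIsNilpotent hζ f ∈ I := by
  change (trunc _ f).eval ζ ∈ I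
  rw [Polynomial.eval_eq_sum_range]
  refine Ideal.sum_mem _ fun i _ => I.mul_mem_right _ ?_
  rw [coeff_trunc]
  split_ifs
  exacts [hf i, I.zero_mem]

section Matrix

open Matrix

theorem exists_units_mul_eq_of_det_eq (hζ : IsNilpotent ζ) {a b c d : A⟦X⟧} (u : A⟦X⟧ˣ)
    (hdet : a * d - b * c = (X - C ζ) * (u : A⟦X⟧)) (hd : IsUnit (evalOfIsNilpotent hζ d)) {t : A}
    (ht : t * evalOfIsNilpotent hζ d = evalOfIsNilpotent hζ c) :
    ∃ G : (Matrix (Fin 2) (Fin 2) A⟦X⟧)ˣ,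
      (↑G : Matrix (Fin 2) (Fin 2) A⟦X⟧) * !![a, b; c, d] = !![X - C ζ, 0; C t, 1] := by
  have hreg := isLeftRegular_X_sub_C hζ
  have hev := congrArg (evalOfIsNilpotent hζ) hdet
  rw [map_mul, (X_sub_C_dvd_iff_evalOfIsNilpotent_eq_zero hζ).1 dvd_rfl, zero_mul, map_sub,
    map_mul, map_mul] at hev
  obtain ⟨w₀, hw₀⟩ : X - C ζ ∣ C t * d - c :=
    (X_sub_C_dvd_iff_evalOfIsNilpotent_eq_zero hζ).2 (by simp [ht])
  obtain ⟨w₁, hw₁⟩ : X - C ζ ∣ a - C t * b := by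
    refine (X_sub_C_dvd_iff_evalOfIsNilpotent_eq_zero hζ).2 (hd.mul_left_injective ?_)
    simp only [map_sub, map_mul, evalOfIsNilpotent_C, zero_mul]
    linear_combination hev - evalOfIsNilpotent hζ b * ht
  have h₀ : w₀ * a + w₁ * c = C t * u :=
    hreg (by linear_combination (-a) * hw₀ - c * hw₁ + C t * hdet)
  have h₁ : d * w₁ + b * w₀ = u :=
    hreg (by linear_combination (-d) * hw₁ - b * hw₀ + hdet)
  have hu : (↑u⁻¹ : A⟦X⟧) * u = 1 := u.inv_mul
  set v : A⟦X⟧ := ↑u⁻¹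
  let G : Matrix (Fin 2) (Fin 2) A⟦X⟧ := !![v * d, -(v * b); v * w₀, v * w₁]
  have hG : IsUnit G := by
    rw [isUnit_iff_isUnit_det, det_fin_two_of,
      show v * d * (v * w₁) - -(v * b) * (v * w₀) = v * v * (d * w₁ + b * w₀) by ring, h₁]
    exact .of_mul_eq_one u (by linear_combination (v * u + 1) * hu)
  refine ⟨hG.unit, ?_⟩
  rw [IsUnit.unit_spec, mul_fin_two,
    show v * d * a + -(v * b) * c = X - C ζ by linear_combination v * hdet + (X - C ζ) * hu,
    show v * d * b + -(v * b) * d = 0 by ring,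
    show v * w₀ * a + v * w₁ * c = C t by linear_combination v * h₀ + C t * hu,
    show v * w₀ * b + v * w₁ * d = 1 by linear_combination v * h₁ + hu]

theorem exists_units_mul_eq_of_coeff_mem (hζ : IsNilpotent ζ) {E : Ideal A}
    (hE : ∀ x ∈ E, IsNilpotent x) {a b c d : A⟦X⟧} (u : A⟦X⟧ˣ)
    (hdet : a * d - b * c = (X - C ζ) * (u : A⟦X⟧)) {h : A} (hd : ∀ k, coeff k (d - 1) ∈ E)
    (hc : ∀ k, coeff k (c - C h) ∈ E) :
    ∃ t, t - h ∈ E ∧ ∃ G : (Matrix (Fin 2) (Fin 2) A⟦X⟧)ˣ,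
      (↑G : Matrix (Fin 2) (Fin 2) A⟦X⟧) * !![a, b; c, d] = !![X - C ζ, 0; C t, 1] := by
  have hd' : evalOfIsNilpotent hζ d - 1 ∈ E := by simpa using evalOfIsNilpotent_mem hζ hd
  have hc' : evalOfIsNilpotent hζ c - h ∈ E := by simpa using evalOfIsNilpotent_mem hζ hc
  have hunit : IsUnit (evalOfIsNilpotent hζ d) := by simpa using (hE _ hd').isUnit_one_add
  obtain ⟨e, he⟩ := hunit.exists_left_inv
  refine ⟨evalOfIsNilpotent hζ c * e, ?_,
    exists_units_mul_eq_of_det_eq hζ u hdet hunit (by rw [mul_assoc, he, mul_one])⟩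
  rw [show evalOfIsNilpotent hζ c * e - h =
      (evalOfIsNilpotent hζ c - h) * e - h * e * (evalOfIsNilpotent hζ d - 1) by
    linear_combination h * he]
  exact sub_mem (E.mul_mem_right _ hc') (E.mul_mem_left _ hd')

end Matrix

end PowerSeries

open HahnSeries

namespace LaurentSeries

variable {A : Type*} [CommRing A]

theorem isUnit_single_one (k : ℤ) : IsUnit (single k (1 : A) : LaurentSeries A) :=
  .of_mul_eq_one (single (-k) 1) (by simp [single_mul_single])

theorem isUnit_single_one_sub_C {ζ : A} (hζ : IsNilpotent ζ) :
    IsUnit (single (1 : ℤ) (1 : A) - C ζ : LaurentSeries A) := by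
  rw [sub_eq_add_neg]
  exact (hζ.map C).neg.isUnit_add_left_of_commute (isUnit_single_one 1) (Commute.all _ _)

theorem exists_ofPowerSeries_eq {f : LaurentSeries A} (hf : ∀ k < 0, f.coeff k = 0) :
    ∃ g : PowerSeries A, ofPowerSeries ℤ A g = f := by
  refine ⟨PowerSeries.mk fun m => f.coeff m, ?_⟩
  ext k
  rcases le_or_gt 0 k with hk | hk
  · lift k to ℕ using hk
    rw [ofPowerSeries_apply_coeff, PowerSeries.coeff_mk]
  · rw [hf k hk, ofPowerSeries_apply, embDomain_of_notMem_range]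
    rintro ⟨m, rfl⟩
    exact (Int.natCast_nonneg m).not_gt hk

theorem exists_map_ofPowerSeries_eq {m n : Type*} (M : Matrix m n (LaurentSeries A))
    (hM : ∀ i j, ∀ k < 0, (M i j).coeff k = 0) :
    ∃ T : Matrix m n (PowerSeries A), T.map (ofPowerSeries ℤ A) = M := by
  choose T hT using fun i j => exists_ofPowerSeries_eq (hM i j)
  exact ⟨Matrix.of T, Matrix.ext hT⟩

def coeffIdeal (I : Ideal A) : Ideal (LaurentSeries A) where
  carrier := {f | ∀ k, f.coeff k ∈ I}
  add_mem' hf hg k := by rw [coeff_add]; exact I.add_mem (hf k) (hg k)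
  zero_mem' k := by rw [coeff_zero]; exact I.zero_mem
  smul_mem' c f hf k := by
    rw [smul_eq_mul, coeff_mul]
    exact I.sum_mem fun ij _ => I.mul_mem_left _ (hf ij.2)

theorem C_mem_coeffIdeal {I : Ideal A} {c : A} (hc : c ∈ I) : C c ∈ coeffIdeal I := fun k => by
  rw [C_apply, coeff_single]
  split_ifs
  exacts [hc, I.zero_mem]

theorem coeff_mem_of_ofPowerSeries_mem_coeffIdeal {I : Ideal A} {f : PowerSeries A}
    (hf : ofPowerSeries ℤ A f ∈ coeffIdeal I) (k : ℕ) : PowerSeries.coeff k f ∈ I := by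
  simpa using hf k

theorem exists_units_map_mul_eq_of_congr {ζ : A} (hζ : IsNilpotent ζ) {E : Ideal A}
    (hE : ∀ x ∈ E, IsNilpotent x) {τ : Matrix (Fin 2) (Fin 2) (LaurentSeries A)}
    (hint : ∀ i j, ∀ k < 0, (τ i j).coeff k = 0) (u : (PowerSeries A)ˣ)
    (hdet : τ.det = (single (1 : ℤ) (1 : A) - C ζ) * ofPowerSeries ℤ A u) {h : A}
    (hτ : (Ideal.Quotient.mk (coeffIdeal E)).mapMatrix τ =
      (Ideal.Quotient.mk (coeffIdeal E)).mapMatrix !![single (1 : ℤ) (1 : A) - C ζ, 0; C h, 1]) :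
    ∃ t, t - h ∈ E ∧ ∃ G : (Matrix (Fin 2) (Fin 2) (PowerSeries A))ˣ,
      (↑G : Matrix (Fin 2) (Fin 2) (PowerSeries A)).map (ofPowerSeries ℤ A) * τ =
        !![single (1 : ℤ) (1 : A) - C ζ, 0; C t, 1] := by
  obtain ⟨T, rfl⟩ := exists_map_ofPowerSeries_eq τ hint
  have hd : ∀ k, PowerSeries.coeff k (T 1 1 - 1) ∈ E :=
    coeff_mem_of_ofPowerSeries_mem_coeffIdeal (by
      simpa using Ideal.Quotient.eq.1 (congrFun (congrFun hτ 1) 1))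
  have hc : ∀ k, PowerSeries.coeff k (T 1 0 - PowerSeries.C h) ∈ E :=
    coeff_mem_of_ofPowerSeries_mem_coeffIdeal (by
      simpa using Ideal.Quotient.eq.1 (congrFun (congrFun hτ 1) 0))
  have hdetT : T 0 0 * T 1 1 - T 0 1 * T 1 0 =
      (PowerSeries.X - PowerSeries.C ζ) * (u : PowerSeries A) :=
    ofPowerSeries_injective (Γ := ℤ) (by simpa [RingHom.map_det, Matrix.det_fin_two] using hdet)
  obtain ⟨t, ht, G, hG⟩ := PowerSeries.exists_units_mul_eq_of_coeff_mem hζ hE u hdetT hd hc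
  refine ⟨t, ht, G, ?_⟩
  rw [← Matrix.map_mul, Matrix.eta_fin_two T, hG, Matrix.map_fin_two_of, map_sub, map_zero,
    RingHom.map_one, ofPowerSeries_X, ofPowerSeries_C, ofPowerSeries_C]

section Frobenius

variable {q : ℕ} {σ : LaurentSeries A →+* LaurentSeries A}
  (hσ : ∀ (f : LaurentSeries A) (k : ℤ), (σ f).coeff k = f.coeff k ^ q)
include hσ

theorem map_single_of_coeff_pow (hq : q ≠ 0) (k : ℤ) (c : A) :
    σ (single k c) = single k (c ^ q) := by
  ext j
  rw [hσ, coeff_single, coeff_single]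
  split_ifs
  exacts [rfl, zero_pow hq]

theorem map_C_of_coeff_pow (hq : q ≠ 0) (c : A) : σ (C c) = C (c ^ q) := by
  simp only [C_apply, map_single_of_coeff_pow hσ hq]

theorem map_eq_of_sub_mem_coeffIdeal {E : Ideal A} (hE : ∀ c ∈ E, c ^ q = 0)
    {f g : LaurentSeries A} (hfg : f - g ∈ coeffIdeal E) : σ f = σ g := by
  rw [← sub_eq_zero, ← map_sub]
  ext k
  rw [hσ, coeff_zero, hE _ (hfg k)]

end Frobenius

end LaurentSeries

section Eta

open LaurentSeries Matrix Finset

variable {A : Type*} [CommRing A] {q : ℕ} {ζ : A} (h : A) (n : ℕ)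

theorem isUnit_single_one_sub_C_pow (hq : q ≠ 0) (hζ : IsNilpotent ζ) (i : ℕ) :
    IsUnit (single (1 : ℤ) (1 : A) - C (ζ ^ q ^ i) : LaurentSeries A) :=
  isUnit_single_one_sub_C (hζ.pow_of_pos (pow_ne_zero i hq))

theorem isUnit_eta (hq : q ≠ 0) (hζ : IsNilpotent ζ) : IsUnit (eta q ζ h n) := by
  rw [Matrix.isUnit_iff_isUnit_det, eta, det_fin_two_of, mul_one, zero_mul, sub_zero,
    IsUnit.prod_iff]
  exact fun i _ => (isUnit_single_one 1).mul (isUnit_single_one_sub_C_pow hq hζ i).ringInverse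

theorem eta_map {σ : LaurentSeries A →+* LaurentSeries A}
    (hσ : ∀ (f : LaurentSeries A) (k : ℤ), (σ f).coeff k = f.coeff k ^ q) (hq : q ≠ 0)
    (hζ : IsNilpotent ζ) : (eta q ζ h n).map σ = eta q (ζ ^ q) (h ^ q) n := by
  have hpow (c : A) (i : ℕ) : (c ^ q ^ i) ^ q = (c ^ q) ^ q ^ i := by
    rw [← pow_mul, ← pow_mul, mul_comm]
  have hinv (i : ℕ) : σ (Ring.inverse (single 1 1 - C (ζ ^ q ^ i))) =
      Ring.inverse (single 1 1 - C ((ζ ^ q) ^ q ^ i)) := by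
    rw [map_ringInverse σ (isUnit_single_one_sub_C_pow hq hζ i), map_sub,
      map_single_of_coeff_pow hσ hq, map_C_of_coeff_pow hσ hq, one_pow, hpow]
  ext i j
  fin_cases i <;> fin_cases j <;>
    simp only [eta, map_apply, of_apply, cons_val', cons_val_zero, cons_val_one, empty_val',
      cons_val_fin_one, Fin.zero_eta, Fin.mk_one, map_zero, map_one, map_neg, map_sum, map_prod,
      map_mul, hinv, map_single_of_coeff_pow hσ hq, map_C_of_coeff_pow hσ hq, hpow, one_pow]

theorem eta_succ_mul (hζ : IsNilpotent ζ) :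
    eta q ζ h (n + 1) * !![single (1 : ℤ) (1 : A) - C ζ, 0; C h, 1] =
      diagonal ![single (1 : ℤ) (1 : A), 1] * eta q (ζ ^ q) (h ^ q) n := by
  rw [eta, eta, diagonal_fin_two, mul_fin_two, mul_fin_two]
  set z : LaurentSeries A := single (1 : ℤ) (1 : A)
  have h0 : Ring.inverse (z - C ζ) * (z - C ζ) = 1 :=
    Ring.inverse_mul_cancel _ (isUnit_single_one_sub_C hζ)
  have hpow (c : A) (i : ℕ) : (c ^ q) ^ q ^ i = c ^ q ^ (i + 1) := by
    rw [← pow_mul, ← pow_succ']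
  have hdiag : (∏ i ∈ range (n + 1), z * Ring.inverse (z - C (ζ ^ q ^ i))) * (z - C ζ) =
      z * ∏ i ∈ range n, z * Ring.inverse (z - C (ζ ^ q ^ (i + 1))) := by
    rw [prod_range_succ', pow_zero, pow_one]
    linear_combination (z * ∏ i ∈ range n, z * Ring.inverse (z - C (ζ ^ q ^ (i + 1)))) * h0
  have hterm (i : ℕ) :
      C (h ^ q ^ (i + 1)) * ∏ j ∈ range (i + 1 + 1), Ring.inverse (z - C (ζ ^ q ^ j)) =
      (C (h ^ q ^ (i + 1)) * ∏ j ∈ range (i + 1), Ring.inverse (z - C (ζ ^ q ^ (j + 1)))) *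
        Ring.inverse (z - C ζ) := by
    rw [prod_range_succ' _ (i + 1), pow_zero, pow_one, mul_assoc]
  have hlower : (-∑ i ∈ range (n + 1), C (h ^ q ^ i) *
        ∏ j ∈ range (i + 1), Ring.inverse (z - C (ζ ^ q ^ j))) * (z - C ζ) + C h =
      -∑ i ∈ range n, C (h ^ q ^ (i + 1)) *
        ∏ j ∈ range (i + 1), Ring.inverse (z - C (ζ ^ q ^ (j + 1))) := by
    rw [sum_range_succ', sum_congr rfl fun i _ => hterm i, ← sum_mul, zero_add, prod_range_one]
    simp only [pow_zero, pow_one]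
    linear_combination (-(∑ i ∈ range n, C (h ^ q ^ (i + 1)) *
        ∏ j ∈ range (i + 1), Ring.inverse (z - C (ζ ^ q ^ (j + 1)))) - C h) * h0
  simp only [hpow, cons_val_zero, cons_val_one, mul_zero, zero_mul, add_zero, zero_add, mul_one,
    one_mul, hdiag, hlower]

theorem mapMatrix_eta_succ {S : Type*} [CommRing S] (π : LaurentSeries A →+* S) (hq : q ≠ 0)
    (hζ : IsNilpotent ζ) (hπζ : π (C (ζ ^ q ^ n)) = 0) (hπh : π (C (h ^ q ^ n)) = 0) :
    π.mapMatrix (eta q ζ h (n + 1)) = π.mapMatrix (eta q ζ h n) := by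
  have hlast : π (single 1 1) * π (Ring.inverse (single (1 : ℤ) (1 : A) - C (ζ ^ q ^ n))) = 1 := by
    rw [← map_mul, ← add_sub_cancel (C (ζ ^ q ^ n)) (single (1 : ℤ) (1 : A)), add_mul,
      add_sub_cancel_left, Ring.mul_inverse_cancel _ (isUnit_single_one_sub_C_pow hq hζ n),
      map_add, map_mul, hπζ, zero_mul, zero_add, map_one]
  ext i j
  fin_cases i <;> fin_cases j <;>
    simp only [eta, RingHom.mapMatrix_apply, map_apply, of_apply, cons_val', cons_val_zero,
      cons_val_one, empty_val', cons_val_fin_one, Fin.zero_eta, Fin.mk_one, prod_range_succ,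
      sum_range_succ, map_mul, map_neg, map_add, hlast, hπh, mul_one, zero_mul, add_zero]

end Eta

section Congruence

open LaurentSeries Matrix

variable {A : Type*} [CommRing A] {q : ℕ} {ζ : A} (h : A) (n : ℕ)

theorem map_units_eq_eta_of_congr {σ : LaurentSeries A →+* LaurentSeries A}
    (hσ : ∀ (f : LaurentSeries A) (k : ℤ), (σ f).coeff k = f.coeff k ^ q) (hq : q ≠ 0)
    (hζ : IsNilpotent ζ) {E : Ideal A} (hE : ∀ c ∈ E, c ^ q = 0)
    {η : (Matrix (Fin 2) (Fin 2) (LaurentSeries A))ˣ}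
    (hη : (Ideal.Quotient.mk (coeffIdeal E)).mapMatrix ↑η⁻¹ =
      (Ideal.Quotient.mk (coeffIdeal E)).mapMatrix (Ring.inverse (eta q ζ h n))) :
    (↑η : Matrix (Fin 2) (Fin 2) (LaurentSeries A)).map σ = eta q (ζ ^ q) (h ^ q) n := by
  have hcongr := map_eq_of_map_inv_eq _ η (isUnit_eta h n hq hζ) hη
  rw [← eta_map h n hσ hq hζ]
  refine Matrix.ext fun i j => ?_
  exact map_eq_of_sub_mem_coeffIdeal hσ hE (Ideal.Quotient.eq.1 (congrFun (congrFun hcongr i) j))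

theorem mapMatrix_units_inv_mul_eta {S : Type*} [CommRing S] (π : LaurentSeries A →+* S)
    (hq : q ≠ 0) (hζ : IsNilpotent ζ) (hπζ : π (C (ζ ^ q ^ n)) = 0)
    (hπh : π (C (h ^ q ^ n)) = 0) {η : (Matrix (Fin 2) (Fin 2) (LaurentSeries A))ˣ}
    (hη : π.mapMatrix ↑η⁻¹ = π.mapMatrix (Ring.inverse (eta q ζ h n))) :
    π.mapMatrix ((↑η⁻¹ : Matrix (Fin 2) (Fin 2) (LaurentSeries A)) *
        diagonal ![single (1 : ℤ) (1 : A), 1] * eta q (ζ ^ q) (h ^ q) n) =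
      π.mapMatrix !![single (1 : ℤ) (1 : A) - C ζ, 0; C h, 1] := by
  rw [mul_assoc, ← eta_succ_mul h n hζ, ← mul_assoc, map_mul, map_mul, hη,
    mapMatrix_eta_succ h n π hq hζ hπζ hπh, ← map_mul,
    Ring.inverse_mul_cancel _ (isUnit_eta h n hq hζ), map_one, one_mul]

end Congruence

open LaurentSeries Matrix in
theorem stmt_7_general {p e q : ℕ} [Fact p.Prime] (hq : q = p ^ e)
    {A : Type*} [CommRing A] [Algebra (GaloisField p e) A]
    (σ : LaurentSeries A →+* LaurentSeries A)
    (hσ : ∀ (f : LaurentSeries A) (k : ℤ), (σ f).coeff k = f.coeff k ^ q)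
    (n : ℕ) (J : Ideal A) (hJ : J ^ q ^ (n + 1) = ⊥)
    (ζ h : A) (hζ : ζ ∈ J) (hh : h ∈ J)
    (η : (Matrix (Fin 2) (Fin 2) (LaurentSeries A))ˣ)
    (τ : Matrix (Fin 2) (Fin 2) (LaurentSeries A))
    (hτ : τ = (↑η⁻¹ : Matrix (Fin 2) (Fin 2) (LaurentSeries A)) *
        Matrix.diagonal ![(HahnSeries.single (1 : ℤ) (1 : A) : LaurentSeries A), 1] *
        ((↑η : Matrix (Fin 2) (Fin 2) (LaurentSeries A)).map ⇑σ))
    (hint : ∀ (i j : Fin 2) (k : ℤ), k < 0 → (τ i j).coeff k = 0)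
    (hdet : ∃ u : (PowerSeries A)ˣ,
      τ.det = ((HahnSeries.single (1 : ℤ) (1 : A) : LaurentSeries A) - HahnSeries.C ζ) *
        HahnSeries.ofPowerSeries ℤ A ↑u)
    (hcong : ∀ (i j : Fin 2) (k : ℤ),
      (((↑η⁻¹ : Matrix (Fin 2) (Fin 2) (LaurentSeries A)) - Ring.inverse (eta q ζ h n)) i j).coeff k
        ∈ J ^ q ^ n) :
    ∃ ht ∈ J, ht - h ∈ J ^ q ^ n ∧
      ∃ g : (Matrix (Fin 2) (Fin 2) (PowerSeries A))ˣ,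
        (↑η : Matrix (Fin 2) (Fin 2) (LaurentSeries A)) =
          eta q ζ ht (n + 1) *
            (↑g : Matrix (Fin 2) (Fin 2) (PowerSeries A)).map ⇑(HahnSeries.ofPowerSeries ℤ A) := by
  obtain ⟨u, hu⟩ := hdet
  have hq0 : q ≠ 0 := hq ▸ pow_ne_zero e (Fact.out : p.Prime).ne_zero
  have hE : ∀ c ∈ J ^ q ^ n, c ^ q = 0 := fun c hc => by
    simpa [← pow_mul, ← pow_succ, hJ] using Ideal.pow_mem_pow hc q
  have hζn : IsNilpotent ζ := ⟨q ^ (n + 1), by simpa [hJ] using Ideal.pow_mem_pow hζ (q ^ (n + 1))⟩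
  set π := Ideal.Quotient.mk (coeffIdeal (J ^ q ^ n))
  have hπ {c : A} (hc : c ∈ J ^ q ^ n) : π (C c) = 0 :=
    Ideal.Quotient.eq_zero_iff_mem.2 (C_mem_coeffIdeal hc)
  have hη : π.mapMatrix ↑η⁻¹ = π.mapMatrix (Ring.inverse (eta q ζ h n)) :=
    Matrix.ext fun i j => Ideal.Quotient.eq.2 fun k => hcong i j k
  have hση := map_units_eq_eta_of_congr h n hσ hq0 hζn hE hη
  have hτπ := mapMatrix_units_inv_mul_eta h n π hq0 hζn (hπ (Ideal.pow_mem_pow hζ _))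
    (hπ (Ideal.pow_mem_pow hh _)) hη
  rw [← hση, ← hτ] at hτπ
  obtain ⟨t, ht, G, hG⟩ :=
    exists_units_map_mul_eq_of_congr hζn (fun x hx => ⟨q, hE x hx⟩) hint u hu hτπ
  refine ⟨t, by simpa using add_mem (Ideal.pow_le_self (pow_ne_zero n hq0) ht) hh, ht, G, ?_⟩
  have htq : t ^ q = h ^ q := by
    subst hq
    exact pow_eq_pow_of_sub_pow_eq_zero (K := GaloisField p e) e (hE _ ht)
  have hτu : IsUnit τ := by
    rw [isUnit_iff_isUnit_det, hu]
    exact (isUnit_single_one_sub_C hζn).mul (u.isUnit.map _)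
  rw [← hτu.mul_left_inj, mul_assoc, hG, eta_succ_mul t n hζn, htq, ← hση, hτ, ← mul_assoc,
    ← mul_assoc, Units.mul_inv, one_mul]

/-- the induction step of the key lemma: Let `q = p^e` be a prime power,
`A` a commutative ring containing `𝔽_q`, `n ≥ 1`, `J ⊆ A` an ideal with `J^{q^{n+1}} = 0`
and `ζ, h ∈ J`. Suppose `η ∈ GL₂(A((z)))` is such that `τ := η⁻¹·diag(z,1)·σ(η)` has all
entries in `A[[z]]`, `det τ = (z − ζ)·u` for a unit `u` of `A[[z]]`, and every coefficient of
every entry of `η⁻¹ − η_{n,h}⁻¹` lies in `J^{q^n}`. Then there are `ht ∈ J` with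
`ht − h ∈ J^{q^n}` and `g ∈ GL₂(A[[z]])` with `η = η_{n+1,ht} · g`. -/
theorem stmt_7 {p e q : ℕ} [Fact p.Prime] (hq : q = p ^ e) (he : 0 < e)
    {A : Type*} [CommRing A] [Algebra (GaloisField p e) A]
    (σ : LaurentSeries A →+* LaurentSeries A)
    (hσ : ∀ (f : LaurentSeries A) (k : ℤ), (σ f).coeff k = f.coeff k ^ q)
    (n : ℕ) (hn : 1 ≤ n) (J : Ideal A) (hJ : J ^ q ^ (n + 1) = ⊥)
    (ζ h : A) (hζ : ζ ∈ J) (hh : h ∈ J)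
    (η : (Matrix (Fin 2) (Fin 2) (LaurentSeries A))ˣ)
    (τ : Matrix (Fin 2) (Fin 2) (LaurentSeries A))
    (hτ : τ = (↑η⁻¹ : Matrix (Fin 2) (Fin 2) (LaurentSeries A)) *
        Matrix.diagonal ![(HahnSeries.single (1 : ℤ) (1 : A) : LaurentSeries A), 1] *
        ((↑η : Matrix (Fin 2) (Fin 2) (LaurentSeries A)).map ⇑σ))
    (hint : ∀ (i j : Fin 2) (k : ℤ), k < 0 → (τ i j).coeff k = 0)
    (hdet : ∃ u : (PowerSeries A)ˣ,
      τ.det = ((HahnSeries.single (1 : ℤ) (1 : A) : LaurentSeries A) - HahnSeries.C ζ) *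
        HahnSeries.ofPowerSeries ℤ A ↑u)
    (hcong : ∀ (i j : Fin 2) (k : ℤ),
      (((↑η⁻¹ : Matrix (Fin 2) (Fin 2) (LaurentSeries A)) - Ring.inverse (eta q ζ h n)) i j).coeff k
        ∈ J ^ q ^ n) :
    ∃ ht ∈ J, ht - h ∈ J ^ q ^ n ∧
      ∃ g : (Matrix (Fin 2) (Fin 2) (PowerSeries A))ˣ,
        (↑η : Matrix (Fin 2) (Fin 2) (LaurentSeries A)) =
          eta q ζ ht (n + 1) *
            (↑g : Matrix (Fin 2) (Fin 2) (PowerSeries A)).map ⇑(HahnSeries.ofPowerSeries ℤ A) :=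
  stmt_7_general hq σ hσ n J hJ ζ h hζ hh η τ hτ hint hdet hcong
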